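/- arXiv:2109.09662 — 4 statements merged into one kernel-verified Lean document; each statement's English description precedes it below -/
import Mathlib

section
/- The number of 312-avoiding permutations in the symmetric group S_n equals the Catalan number C_n = (1/(n+1)) · binom(2n, n). -/
/-- A permutation `σ ∈ S_n` is 312-avoiding if there are no indices `a < b < c`
with `σ(a) > σ(c) > σ(b)`. -/
def Avoids312 {n : ℕ} (σ : Equiv.Perm (Fin n)) : Prop :=
  ∀ a b c : Fin n, a < b → b < c → ¬(σ b < σ c ∧ σ c < σ a)

/-!
If `σ` avoids 312 and `σ i = 0`, every entry left of position `i` is smaller than every entry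
right of it, since otherwise the two entries and the `0` between them form a 312. Hence `σ` is a
312-avoiding permutation of `{1, …, i}`, then `0`, then a 312-avoiding permutation of
`{i + 1, …, n}`, and conversely every such concatenation avoids 312. Summing over the position
`i` of the minimum gives the Catalan recurrence `C (n + 1) = ∑ i, C i * C (n - i)`.
-/

open Equiv Function

def AvoidsPattern312 {α β : Type*} [Preorder α] [Preorder β] (f : α → β) : Prop :=
  ∀ a b c : α, a < b → b < c → ¬(f b < f c ∧ f c < f a)

theorem avoids312_iff_avoidsPattern312 {n : ℕ} (σ : Perm (Fin n)) :
    Avoids312 σ ↔ AvoidsPattern312 σ :=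
  Iff.rfl

theorem Fin.exists_castAdd_eq {a b : ℕ} {x : Fin (a + b)} (hx : (x : ℕ) < a) :
    ∃ w, Fin.castAdd b w = x :=
  ⟨x.castLT hx, Fin.castAdd_castLT b x hx⟩

theorem Fin.exists_natAdd_eq {a b : ℕ} {x : Fin (a + b)} (hx : a ≤ (x : ℕ)) :
    ∃ w, Fin.natAdd a w = x :=
  ⟨⟨x - a, by omega⟩, Fin.ext (by simp only [Fin.val_natAdd]; omega)⟩

section Pattern

variable {α β γ : Type*}

theorem AvoidsPattern312.comp_strictMono [Preorder α] [Preorder β] [Preorder γ] {f : β → γ}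
    {e : α → β} (hf : AvoidsPattern312 f) (he : StrictMono e) : AvoidsPattern312 (f ∘ e) :=
  fun a b c hab hbc => hf (e a) (e b) (e c) (he hab) (he hbc)

theorem StrictMono.avoidsPattern312_comp_iff [Preorder α] [LinearOrder β] [Preorder γ]
    {g : β → γ} {f : α → β} (hg : StrictMono g) :
    AvoidsPattern312 (g ∘ f) ↔ AvoidsPattern312 f := by
  simp only [AvoidsPattern312, comp_apply, hg.lt_iff_lt]

def SplitsAt [Preorder α] {n : ℕ} (f : Fin n → α) (a : ℕ) : Prop :=
  ∀ k l : Fin n, (k : ℕ) < a → a ≤ (l : ℕ) → f k ≤ f l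

theorem StrictMono.splitsAt_comp_iff [LinearOrder α] [Preorder β] {n : ℕ} {g : α → β}
    {f : Fin n → α} (hg : StrictMono g) {a : ℕ} : SplitsAt (g ∘ f) a ↔ SplitsAt f a := by
  simp only [SplitsAt, comp_apply, hg.le_iff_le]

theorem avoidsPattern312_iff_of_splitsAt [Preorder α] {a b : ℕ} {f : Fin (a + b) → α}
    (hf : SplitsAt f a) :
    AvoidsPattern312 f ↔
      AvoidsPattern312 (f ∘ Fin.castAdd b) ∧ AvoidsPattern312 (f ∘ Fin.natAdd a) := by
  refine ⟨fun h => ⟨h.comp_strictMono (Fin.strictMono_castAdd b),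
    h.comp_strictMono (Fin.strictMono_natAdd a)⟩, fun ⟨hl, hr⟩ x y z hxy hyz hpat => ?_⟩
  have hxy' : (x : ℕ) < y := hxy
  have hyz' : (y : ℕ) < z := hyz
  by_cases hz : (z : ℕ) < a
  · obtain ⟨x, rfl⟩ := Fin.exists_castAdd_eq (b := b) (x := x) (by omega)
    obtain ⟨y, rfl⟩ := Fin.exists_castAdd_eq (b := b) (x := y) (by omega)
    obtain ⟨z, rfl⟩ := Fin.exists_castAdd_eq hz
    rw [(Fin.strictMono_castAdd b).lt_iff_lt] at hxy hyz
    exact hl x y z hxy hyz hpat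
  by_cases hx : a ≤ (x : ℕ)
  · obtain ⟨x, rfl⟩ := Fin.exists_natAdd_eq hx
    obtain ⟨y, rfl⟩ := Fin.exists_natAdd_eq (a := a) (x := y) (by omega)
    obtain ⟨z, rfl⟩ := Fin.exists_natAdd_eq (a := a) (x := z) (by omega)
    rw [(Fin.strictMono_natAdd a).lt_iff_lt] at hxy hyz
    exact hr x y z hxy hyz hpat
  exact (hf x z (by omega) (by omega)).not_gt hpat.2

theorem avoidsPattern312_iff_of_forall_lt [LinearOrder α] {n : ℕ} {f : Fin (n + 1) → α}
    {i : Fin (n + 1)} (hmin : ∀ x, x ≠ i → f i < f x) :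
    AvoidsPattern312 f ↔
      AvoidsPattern312 (f ∘ i.succAbove) ∧ SplitsAt (f ∘ i.succAbove) i := by
  refine ⟨fun h => ⟨h.comp_strictMono (Fin.strictMono_succAbove i), fun k l hk hl => ?_⟩,
    fun ⟨hf, hsplit⟩ x y z hxy hyz ⟨hyz', hzx'⟩ => ?_⟩
  · have hki : i.succAbove k < i := by
      rw [Fin.succAbove_lt_iff_castSucc_lt, Fin.lt_def]; exact hk
    have hil : i < i.succAbove l := by
      rw [Fin.lt_succAbove_iff_le_castSucc, Fin.le_def]; exact hl
    exact not_lt.mp fun hlk => h _ _ _ hki hil ⟨hmin _ hil.ne', hlk⟩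
  have hmin' : ∀ w, f i ≤ f w := fun w => by
    rcases eq_or_ne w i with rfl | hw
    exacts [le_rfl, (hmin w hw).le]
  obtain ⟨k, rfl⟩ := Fin.exists_succAbove_eq (x := x) (y := i)
    fun h => (hyz'.trans hzx').not_ge (h ▸ hmin' y)
  obtain ⟨m, rfl⟩ := Fin.exists_succAbove_eq (x := z) (y := i)
    fun h => hyz'.not_ge (h ▸ hmin' y)
  rcases eq_or_ne y i with rfl | hy
  · refine hzx'.not_ge (hsplit k m ?_ ?_)
    · exact Fin.lt_def.mp ((Fin.succAbove_lt_iff_castSucc_lt _ _).mp hxy)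
    · exact Fin.le_def.mp ((Fin.lt_succAbove_iff_le_castSucc _ _).mp hyz)
  obtain ⟨l, rfl⟩ := Fin.exists_succAbove_eq hy
  rw [(Fin.strictMono_succAbove i).lt_iff_lt] at hxy hyz
  exact hf k l m hxy hyz ⟨hyz', hzx'⟩

end Pattern

namespace Equiv.Perm

variable {n : ℕ}

def insertMin (i : Fin (n + 1)) (π : Perm (Fin n)) : Perm (Fin (n + 1)) :=
  (finSuccEquiv' i).trans (π.optionCongr.trans (finSuccEquiv n).symm)

@[simp]
theorem insertMin_apply_self (i : Fin (n + 1)) (π : Perm (Fin n)) : insertMin i π i = 0 := by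
  simp [insertMin]

@[simp]
theorem insertMin_apply_succAbove (i : Fin (n + 1)) (π : Perm (Fin n)) (k : Fin n) :
    insertMin i π (i.succAbove k) = (π k).succ := by
  simp [insertMin]

theorem insertMin_injective (i : Fin (n + 1)) : Injective (insertMin (n := n) i) := by
  intro π π' h
  exact Equiv.ext fun k => by simpa using DFunLike.congr_fun h (i.succAbove k)

theorem exists_insertMin_eq {σ : Perm (Fin (n + 1))} {i : Fin (n + 1)} (hσ : σ i = 0) :
    ∃ π, insertMin i π = σ := by
  set τ := (finSuccEquiv' i).symm.trans (σ.trans (finSuccEquiv n))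
  have hτ : (removeNone τ).optionCongr = τ := by
    rw [map_equiv_removeNone, show τ none = none by simp [τ, hσ], swap_self, ← one_def,
      one_mul]
  refine ⟨removeNone τ, ?_⟩
  ext x
  simp [insertMin, hτ, τ]

theorem avoids312_insertMin_iff (i : Fin (n + 1)) (π : Perm (Fin n)) :
    Avoids312 (insertMin i π) ↔ Avoids312 π ∧ SplitsAt π i := by
  have hmin : ∀ x, x ≠ i → insertMin i π i < insertMin i π x := fun x hx => by
    obtain ⟨k, rfl⟩ := Fin.exists_succAbove_eq hx
    simp [Fin.succ_pos]
  have hcomp : insertMin i π ∘ i.succAbove = Fin.succ ∘ π :=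
    funext (insertMin_apply_succAbove i π)
  simp only [avoids312_iff_avoidsPattern312]
  rw [avoidsPattern312_iff_of_forall_lt hmin, hcomp, Fin.strictMono_succ.avoidsPattern312_comp_iff,
    Fin.strictMono_succ.splitsAt_comp_iff]

def finSumCongr {a b : ℕ} (τ : Perm (Fin a)) (ρ : Perm (Fin b)) : Perm (Fin (a + b)) :=
  finSumFinEquiv.permCongr (τ.sumCongr ρ)

variable {a b : ℕ}

@[simp]
theorem finSumCongr_apply_castAdd (τ : Perm (Fin a)) (ρ : Perm (Fin b)) (k : Fin a) :
    finSumCongr τ ρ (Fin.castAdd b k) = Fin.castAdd b (τ k) := by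
  simp [finSumCongr]

@[simp]
theorem finSumCongr_apply_natAdd (τ : Perm (Fin a)) (ρ : Perm (Fin b)) (k : Fin b) :
    finSumCongr τ ρ (Fin.natAdd a k) = Fin.natAdd a (ρ k) := by
  simp [finSumCongr]

theorem finSumCongr_injective :
    Injective fun p : Perm (Fin a) × Perm (Fin b) => finSumCongr p.1 p.2 :=
  finSumFinEquiv.permCongr.injective.comp sumCongrHom_injective

theorem splitsAt_finSumCongr (τ : Perm (Fin a)) (ρ : Perm (Fin b)) :
    SplitsAt (finSumCongr τ ρ) a := by
  intro k l hk hl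
  obtain ⟨k, rfl⟩ := Fin.exists_castAdd_eq hk
  obtain ⟨l, rfl⟩ := Fin.exists_natAdd_eq hl
  simp only [finSumCongr_apply_castAdd, finSumCongr_apply_natAdd, Fin.le_def, Fin.val_castAdd,
    Fin.val_natAdd]
  omega

theorem _root_.SplitsAt.apply_castAdd_lt {π : Perm (Fin (a + b))} (hπ : SplitsAt π a)
    (k : Fin a) :
    (π (Fin.castAdd b k) : ℕ) < a := by
  -- Pigeonhole: otherwise the `b` entries right of position `a` all lie above
  -- `π (castAdd b k) ≥ a`.
  by_contra! hv
  have hmaps : ∀ l : Fin b, π (Fin.natAdd a l) ∈ Finset.Ioi (π (Fin.castAdd b k)) := fun l =>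
    Finset.mem_Ioi.mpr <| (hπ _ _ (by simp) (by simp)).lt_of_ne <|
      π.injective.ne <| Fin.ne_of_lt <| by
        simp only [Fin.lt_def, Fin.val_castAdd, Fin.val_natAdd]; omega
  have hcard := Finset.card_le_card_of_injOn (s := Finset.univ) _ (fun l _ => hmaps l)
    (fun l₁ _ l₂ _ h => Fin.natAdd_injective b a (π.injective h))
  rw [Finset.card_univ, Fintype.card_fin, Fin.card_Ioi] at hcard
  have := (π (Fin.castAdd b k)).isLt
  omega

theorem exists_finSumCongr_eq {π : Perm (Fin (a + b))} (hπ : SplitsAt π a) :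
    ∃ τ ρ, finSumCongr τ ρ = π := by
  have hmaps : Set.MapsTo (finSumFinEquiv.symm.permCongr π) (Set.range Sum.inl)
      (Set.range Sum.inl) := by
    rintro _ ⟨k, rfl⟩
    obtain ⟨w, hw⟩ := Fin.exists_castAdd_eq (b := b) (hπ.apply_castAdd_lt k)
    exact ⟨w, by rw [permCongr_apply, symm_symm, finSumFinEquiv_apply_left, ← hw,
      finSumFinEquiv_symm_apply_castAdd]⟩
  obtain ⟨⟨τ, ρ⟩, h⟩ := mem_sumCongrHom_range_of_perm_mapsTo_inl hmaps
  refine ⟨τ, ρ, ?_⟩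
  have h' : τ.sumCongr ρ = finSumFinEquiv.symm.permCongr π := h
  rw [finSumCongr, h', ← permCongr_symm, apply_symm_apply]

theorem avoids312_finSumCongr_iff (τ : Perm (Fin a)) (ρ : Perm (Fin b)) :
    Avoids312 (finSumCongr τ ρ) ↔ Avoids312 τ ∧ Avoids312 ρ := by
  have hl : finSumCongr τ ρ ∘ Fin.castAdd b = Fin.castAdd b ∘ τ :=
    funext (finSumCongr_apply_castAdd τ ρ)
  have hr : finSumCongr τ ρ ∘ Fin.natAdd a = Fin.natAdd a ∘ ρ :=
    funext (finSumCongr_apply_natAdd τ ρ)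
  simp only [avoids312_iff_avoidsPattern312,
    avoidsPattern312_iff_of_splitsAt (splitsAt_finSumCongr τ ρ), hl, hr,
    (Fin.strictMono_castAdd b).avoidsPattern312_comp_iff,
    (Fin.strictMono_natAdd a).avoidsPattern312_comp_iff]

end Equiv.Perm

open Perm

theorem natCard_avoids312_apply_eq_zero {n : ℕ} (i : Fin (n + 1)) :
    Nat.card {σ : Perm (Fin (n + 1)) // Avoids312 σ ∧ σ i = 0} =
      Nat.card {π : Perm (Fin n) // Avoids312 π ∧ SplitsAt π i} := by
  refine (Nat.card_congr (Equiv.ofBijective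
    (fun π => ⟨insertMin i π, (avoids312_insertMin_iff i π).mpr π.2,
      insertMin_apply_self i π⟩)
    ⟨fun π π' h => Subtype.ext (insertMin_injective i (congrArg Subtype.val h)), ?_⟩)).symm
  rintro ⟨σ, hσ, hi⟩
  obtain ⟨π, rfl⟩ := exists_insertMin_eq hi
  exact ⟨⟨π, (avoids312_insertMin_iff i π).mp hσ⟩, rfl⟩

theorem natCard_avoids312_splitsAt {n a b : ℕ} (h : a + b = n) :
    Nat.card {π : Perm (Fin n) // Avoids312 π ∧ SplitsAt π a} =
      Nat.card {τ : Perm (Fin a) // Avoids312 τ} *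
        Nat.card {ρ : Perm (Fin b) // Avoids312 ρ} := by
  subst h
  rw [← Nat.card_prod, ← Nat.card_congr subtypeProdEquivProd]
  refine (Nat.card_congr (Equiv.ofBijective
    (fun p => ⟨finSumCongr p.1.1 p.1.2, (avoids312_finSumCongr_iff _ _).mpr p.2,
      splitsAt_finSumCongr _ _⟩)
    ⟨fun p p' h => Subtype.ext (finSumCongr_injective (congrArg Subtype.val h)), ?_⟩)).symm
  rintro ⟨π, hπ, hsplit⟩
  obtain ⟨τ, ρ, rfl⟩ := exists_finSumCongr_eq hsplit
  exact ⟨⟨(τ, ρ), (avoids312_finSumCongr_iff τ ρ).mp hπ⟩, rfl⟩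

theorem natCard_avoids312_succ (n : ℕ) :
    Nat.card {σ : Perm (Fin (n + 1)) // Avoids312 σ} =
      ∑ i : Fin (n + 1), Nat.card {τ : Perm (Fin i) // Avoids312 τ} *
        Nat.card {ρ : Perm (Fin (n - i)) // Avoids312 ρ} := by
  have hfibers : {σ : Perm (Fin (n + 1)) // Avoids312 σ} ≃
      Σ i : Fin (n + 1), {σ : Perm (Fin (n + 1)) // Avoids312 σ ∧ σ i = 0} :=
    (sigmaFiberEquiv fun σ : {σ : Perm (Fin (n + 1)) // Avoids312 σ} => σ.1.symm 0).symm.trans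
      (sigmaCongrRight fun i => (subtypeSubtypeEquivSubtypeInter Avoids312 (·.symm 0 = i)).trans
        (subtypeEquivRight fun σ => and_congr_right fun _ => (symm_apply_eq σ).trans eq_comm))
  rw [Nat.card_congr hfibers, Nat.card_sigma]
  refine Finset.sum_congr rfl fun i _ => ?_
  rw [natCard_avoids312_apply_eq_zero, natCard_avoids312_splitsAt (Nat.add_sub_of_le i.is_le)]

theorem natCard_avoids312_zero : Nat.card {σ : Perm (Fin 0) // Avoids312 σ} = 1 :=
  Nat.card_eq_one_iff_exists.mpr ⟨⟨1, fun a => a.elim0⟩, fun _ => Subsingleton.elim _ _⟩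

/-- The number of 312-avoiding permutations in `S_n` equals the Catalan number `C_n`. -/
theorem card_avoids312_eq_catalan (n : ℕ) :
    Nat.card {σ : Equiv.Perm (Fin n) // Avoids312 σ} = catalan n := by
  induction n using Nat.strong_induction_on with
  | _ n ih =>
    cases n with
    | zero => rw [natCard_avoids312_zero, catalan_zero]
    | succ n =>
      rw [natCard_avoids312_succ, catalan_succ]
      exact Finset.sum_congr rfl fun i _ => by rw [ih i (by omega), ih (n - i) (by omega)]
end

section
/- A triangulation of a convex (n+2)-gon fixed by rotation through angle π exists only if n+2 is even, and such a triangulation must contain a diameter (a diagonal connecting two antipodal vertices i and i+(n+2)/2). -/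
/-- The unordered pair `{a,b}` written as an ordered pair with smaller entry first. -/
def opair {m : ℕ} (a b : Fin m) : Fin m × Fin m := if a ≤ b then (a, b) else (b, a)

/-- `d` is a diagonal of the convex `(n+2)`-gon with vertices `0, …, n+1` (in cyclic order):
its endpoints are distinct, non-adjacent vertices, written in increasing order. -/
def IsDiagonal (n : ℕ) (d : Fin (n + 2) × Fin (n + 2)) : Prop :=
  d.1 < d.2 ∧ (d.1 : ℕ) + 1 < (d.2 : ℕ) ∧ ¬((d.1 : ℕ) = 0 ∧ (d.2 : ℕ) = n + 1)

/-- Two diagonals (each written with increasing endpoints) cross in the interior. -/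
def Crossing {m : ℕ} (d e : Fin m × Fin m) : Prop :=
  (d.1 < e.1 ∧ e.1 < d.2 ∧ d.2 < e.2) ∨ (e.1 < d.1 ∧ d.1 < e.2 ∧ e.2 < d.2)

/-- A triangulation of the convex `(n+2)`-gon: a maximal set of pairwise non-crossing
diagonals (which divides the polygon into `n` triangles). -/
structure Triangulation (n : ℕ) where
  diags : Finset (Fin (n + 2) × Fin (n + 2))
  isDiag : ∀ d ∈ diags, IsDiagonal n d
  noncross : ∀ d ∈ diags, ∀ e ∈ diags, ¬ Crossing d e
  maximal : ∀ d, IsDiagonal n d → (∀ e ∈ diags, ¬ Crossing d e) → d ∈ diags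

/-- The effect of rotating the polygon by `k` steps on a diagonal. -/
def rotp {m : ℕ} (k : Fin m) (d : Fin m × Fin m) : Fin m × Fin m :=
  opair (d.1 + k) (d.2 + k)

/-!
Let `k` be the half-turn. Among the diagonals of an invariant triangulation take one of maximal
chord length; it or its image under the half-turn spans an arc from `a < k` to some `b ≤ a + k`.
No diagonal can cross the diameter from `a` without crossing that diagonal or its image, or
being longer than it, so by maximality of the triangulation the diameter belongs to it.
-/

def chordLength {m : ℕ} (d : Fin m × Fin m) : ℕ :=
  min ((d.2 : ℕ) - d.1) (m - ((d.2 : ℕ) - d.1))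

section HalfTurn

variable {m : ℕ} {k : Fin m}

lemma val_add_halfTurn_of_lt (hk : 2 * (k : ℕ) = m) {a : Fin m} (ha : (a : ℕ) < k) :
    ((a + k : Fin m) : ℕ) = a + k := by
  rw [Fin.val_add, Nat.mod_eq_of_lt (by omega)]

lemma val_add_halfTurn_of_le (hk : 2 * (k : ℕ) = m) {a : Fin m} (ha : (k : ℕ) ≤ a) :
    ((a + k : Fin m) : ℕ) = a - k := by
  have := a.isLt
  rw [Fin.val_add, Nat.mod_eq_sub_mod (by omega), Nat.mod_eq_of_lt (by omega)]
  omega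

lemma rotp_halfTurn_of_lt (hk : 2 * (k : ℕ) = m) {d : Fin m × Fin m}
    (h12 : (d.1 : ℕ) ≤ d.2) (h2 : (d.2 : ℕ) < k) :
    ((rotp k d).1 : ℕ) = d.1 + k ∧ ((rotp k d).2 : ℕ) = d.2 + k := by
  have e1 := val_add_halfTurn_of_lt hk (lt_of_le_of_lt h12 h2)
  have e2 := val_add_halfTurn_of_lt hk h2
  unfold rotp opair
  split_ifs with h <;> simp only [Fin.le_def] at h ⊢ <;> omega

lemma rotp_halfTurn_of_le (hk : 2 * (k : ℕ) = m) {d : Fin m × Fin m}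
    (h1 : (k : ℕ) ≤ d.1) (h12 : (d.1 : ℕ) ≤ d.2) :
    ((rotp k d).1 : ℕ) = d.1 - k ∧ ((rotp k d).2 : ℕ) = d.2 - k := by
  have e1 := val_add_halfTurn_of_le hk h1
  have e2 := val_add_halfTurn_of_le hk (h1.trans h12)
  unfold rotp opair
  split_ifs with h <;> simp only [Fin.le_def] at h ⊢ <;> omega

lemma rotp_halfTurn_of_lt_of_le (hk : 2 * (k : ℕ) = m) {d : Fin m × Fin m}
    (h1 : (d.1 : ℕ) < k) (h2 : (k : ℕ) ≤ d.2) :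
    ((rotp k d).1 : ℕ) = d.2 - k ∧ ((rotp k d).2 : ℕ) = d.1 + k := by
  have e1 := val_add_halfTurn_of_lt hk h1
  have e2 := val_add_halfTurn_of_le hk h2
  unfold rotp opair
  split_ifs with h <;> simp only [Fin.le_def] at h ⊢ <;> omega

lemma exists_short_in_halfTurn_orbit (hk : 2 * (k : ℕ) = m) {d : Fin m × Fin m}
    (hd : (d.1 : ℕ) ≤ d.2) :
    ∃ e, (e = d ∨ e = rotp k d) ∧ (e.1 : ℕ) < k ∧ (e.1 : ℕ) ≤ e.2 ∧ (e.2 : ℕ) ≤ e.1 + k ∧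
      chordLength d = e.2 - e.1 := by
  have := d.2.isLt
  unfold chordLength
  by_cases hshort : (d.2 : ℕ) ≤ d.1 + k
  · by_cases h1 : (d.1 : ℕ) < k
    · exact ⟨d, .inl rfl, h1, hd, hshort, by omega⟩
    · obtain ⟨r1, r2⟩ := rotp_halfTurn_of_le hk (not_lt.mp h1) hd
      exact ⟨rotp k d, .inr rfl, by omega, by omega, by omega, by omega⟩
  · obtain ⟨r1, r2⟩ := rotp_halfTurn_of_lt_of_le hk (d := d) (by omega) (by omega)
    exact ⟨rotp k d, .inr rfl, by omega, by omega, by omega, by omega⟩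

/-- A chord crossing the diameter from `e.1` would have one endpoint in the arc between `e.2` and
`e.1 + k` and the other in the opposite arc, between `e.2 + k` and `e.1`; so it would be longer
than `e`. -/
lemma not_crossing_diameter_of_chordLength_le (hk : 2 * (k : ℕ) = m) {e f : Fin m × Fin m}
    (h1 : (e.1 : ℕ) < k) (h12 : (e.1 : ℕ) ≤ e.2) (h2 : (e.2 : ℕ) ≤ e.1 + k)
    (hlen : chordLength f ≤ e.2 - e.1) (he : ¬ Crossing e f) (hre : ¬ Crossing (rotp k e) f) :
    ¬ Crossing (e.1, e.1 + k) f := by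
  have hdiam := val_add_halfTurn_of_lt hk h1
  have := f.2.isLt
  unfold chordLength at hlen
  simp only [Crossing, Fin.lt_def, hdiam] at he hre ⊢
  rcases lt_or_ge (e.2 : ℕ) k with h2k | h2k
  · obtain ⟨r1, r2⟩ := rotp_halfTurn_of_lt hk h12 h2k
    omega
  · obtain ⟨r1, r2⟩ := rotp_halfTurn_of_lt_of_le hk h1 h2k
    omega

end HalfTurn

namespace Triangulation

variable {n : ℕ} (T : Triangulation n) {k : Fin (n + 2)}

lemma exists_diameter_not_crossing (hk : 2 * (k : ℕ) = n + 2)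
    (hT : T.diags.image (rotp k) = T.diags) :
    ∃ a : Fin (n + 2), (a : ℕ) < k ∧ ∀ f ∈ T.diags, ¬ Crossing (a, a + k) f := by
  have hrot : ∀ d ∈ T.diags, rotp k d ∈ T.diags := fun d hd => hT ▸ Finset.mem_image_of_mem _ hd
  rcases T.diags.eq_empty_or_nonempty with hempty | hne
  · exact ⟨0, by simp only [Fin.val_zero]; omega, by simp [hempty]⟩
  obtain ⟨d, hd, hmax⟩ := T.diags.exists_max_image chordLength hne
  obtain ⟨e, hed, h1, h12, h2, hlen⟩ :=
    exists_short_in_halfTurn_orbit hk (Fin.le_def.mp (T.isDiag d hd).1.le)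
  have he : e ∈ T.diags := by rcases hed with rfl | rfl <;> simp [hd, hrot]
  exact ⟨e.1, h1, fun f hf => not_crossing_diameter_of_chordLength_le hk h1 h12 h2
    (hlen ▸ hmax f hf) (T.noncross e he f hf) (T.noncross _ (hrot e he) f hf)⟩

end Triangulation

/-- A triangulation of a convex `(n+2)`-gon fixed by rotation through the angle `π`
(i.e. by `k` steps where `2k = n+2`) exists only if `n+2` is even, and such a
triangulation must contain a diameter: a diagonal connecting two antipodal vertices
`i` and `i + (n+2)/2`. -/
theorem fixed_by_halfturn_has_diameter (n : ℕ) (hn : 2 ≤ n) (T : Triangulation n)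
    (k : Fin (n + 2)) (hk : 2 * (k : ℕ) = n + 2)
    (hT : T.diags.image (rotp k) = T.diags) :
    2 ∣ (n + 2) ∧ ∃ d ∈ T.diags, (d.2 : ℕ) = (d.1 : ℕ) + (n + 2) / 2 := by
  refine ⟨⟨k, hk.symm⟩, ?_⟩
  obtain ⟨a, ha, hfree⟩ := T.exists_diameter_not_crossing hk hT
  have hval := val_add_halfTurn_of_lt hk ha
  have hdiag : IsDiagonal n (a, a + k) := by
    simp only [IsDiagonal, Fin.lt_def, hval]
    omega
  exact ⟨_, T.maximal _ hdiag hfree, by simp only [hval]; omega⟩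
end

section
/- A triangulation of a convex (n+2)-gon invariant under rotation by 2π/3 exists only if 3 divides n+2 and n ≡ 1 mod 3, and such a triangulation has a central triangle with vertices i, i + (n+2)/3, i + 2(n+2)/3 for some i. -/
namespace CentralTri

lemma opair_comm {m : ℕ} (a b : Fin m) : opair a b = opair b a := by
  unfold opair
  rcases le_total a b with h | h
  · rcases eq_or_lt_of_le h with rfl | hlt
    · simp
    · rw [if_pos h, if_neg (not_le.2 hlt)]
  · rcases eq_or_lt_of_le h with rfl | hlt
    · simp
    · rw [if_neg (not_le.2 hlt), if_pos h]

lemma rotp_opair {m : ℕ} (k a b : Fin m) : rotp k (opair a b) = opair (a + k) (b + k) := by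
  by_cases h : a ≤ b
  · have h1 : opair a b = (a, b) := if_pos h
    rw [h1]; rfl
  · have h1 : opair a b = (b, a) := if_neg h
    rw [h1]
    show opair (b + k) (a + k) = _
    exact opair_comm _ _

lemma addk_val {m : ℕ} (x k : Fin m) :
    (x + k).val = if x.val + k.val < m then x.val + k.val else x.val + k.val - m := by
  rw [Fin.val_add]
  split_ifs with h
  · exact Nat.mod_eq_of_lt h
  · have hx := x.isLt
    have hk := k.isLt
    rw [Nat.mod_eq_sub_mod (le_of_not_gt h), Nat.mod_eq_of_lt (by omega)]

def Eset (n : ℕ) (T : Triangulation n) : Finset (Fin (n+2) × Fin (n+2)) :=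
  T.diags ∪ Finset.univ.filter
    (fun d => d.2.val = d.1.val + 1 ∨ (d.1.val = 0 ∧ d.2.val = n+1))

lemma side_mem {n : ℕ} (T : Triangulation n) (d : Fin (n+2) × Fin (n+2))
    (h : d.2.val = d.1.val + 1 ∨ (d.1.val = 0 ∧ d.2.val = n+1)) : d ∈ Eset n T :=
  Finset.mem_union_right _ (Finset.mem_filter.2 ⟨Finset.mem_univ _, h⟩)

lemma E_cases {n : ℕ} {T : Triangulation n} {d : Fin (n+2) × Fin (n+2)} (hd : d ∈ Eset n T) :
    d ∈ T.diags ∨ (d.2.val = d.1.val + 1 ∨ (d.1.val = 0 ∧ d.2.val = n+1)) := by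
  rcases Finset.mem_union.1 hd with h | h
  · exact Or.inl h
  · exact Or.inr (Finset.mem_filter.1 h).2

lemma E_lt {n : ℕ} {T : Triangulation n} {d : Fin (n+2) × Fin (n+2)} (hd : d ∈ Eset n T) :
    d.1.val < d.2.val := by
  rcases E_cases hd with h | h | h
  · exact (T.isDiag d h).1
  · omega
  · omega

lemma side_nocross {n : ℕ} {d e : Fin (n+2) × Fin (n+2)}
    (h : d.2.val = d.1.val + 1 ∨ (d.1.val = 0 ∧ d.2.val = n+1)) : ¬ Crossing d e := by
  rintro (⟨h1, h2, h3⟩ | ⟨h1, h2, h3⟩) <;>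
  · have c1 := e.2.isLt
    have q1 : _ := h1
    have q2 : _ := h2
    have q3 : _ := h3
    rw [Fin.lt_def] at q1 q2 q3
    omega

lemma crossing_symm {m : ℕ} {d e : Fin m × Fin m} (h : Crossing d e) : Crossing e d := by
  rcases h with h | h
  · exact Or.inr h
  · exact Or.inl h

lemma E_nocross {n : ℕ} {T : Triangulation n} {d g : Fin (n+2) × Fin (n+2)}
    (hd : d ∈ Eset n T) (hg : g ∈ T.diags) : ¬ Crossing d g := by
  rcases E_cases hd with h | h
  · exact T.noncross d h g hg
  · exact side_nocross h

lemma rot_mem {n : ℕ} {T : Triangulation n} {k : Fin (n+2)}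
    (hT : T.diags.image (rotp k) = T.diags) {d : Fin (n+2) × Fin (n+2)}
    (hd : d ∈ T.diags) : rotp k d ∈ T.diags := by
  rw [← hT]
  exact Finset.mem_image_of_mem _ hd

lemma span_bound {n : ℕ} (hn : 2 ≤ n) {T : Triangulation n} {k : Fin (n+2)}
    (hk : 3 * k.val = n + 2) (hT : T.diags.image (rotp k) = T.diags)
    {d : Fin (n+2) × Fin (n+2)} (hd : d ∈ T.diags) :
    d.2.val - d.1.val ≤ k.val ∨ 2 * k.val ≤ d.2.val - d.1.val := by
  by_contra hcon
  push_neg at hcon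
  obtain ⟨hs1, hs2⟩ := hcon
  have hlt : d.1.val < d.2.val := (T.isDiag d hd).1
  have ha := d.1.isLt
  have hb := d.2.isLt
  have he : rotp k d ∈ T.diags := rot_mem hT hd
  refine T.noncross d hd _ he ?_
  have hu := addk_val d.1 k
  have hw := addk_val d.2 k
  by_cases hc1 : d.1.val + k.val < n + 2
  · by_cases hc2 : d.2.val + k.val < n + 2
    · rw [if_pos hc1] at hu
      rw [if_pos hc2] at hw
      have hle : d.1 + k ≤ d.2 + k := by rw [Fin.le_def]; omega
      unfold rotp opair
      rw [if_pos hle]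
      refine Or.inl ⟨?_, ?_, ?_⟩
      · show d.1 < d.1 + k
        rw [Fin.lt_def]; omega
      · show d.1 + k < d.2
        rw [Fin.lt_def]; omega
      · show d.2 < d.2 + k
        rw [Fin.lt_def]; omega
    · rw [if_pos hc1] at hu
      rw [if_neg hc2] at hw
      have hle : ¬ (d.1 + k ≤ d.2 + k) := by rw [Fin.le_def]; omega
      unfold rotp opair
      rw [if_neg hle]
      refine Or.inr ⟨?_, ?_, ?_⟩
      · show d.2 + k < d.1
        rw [Fin.lt_def]; omega
      · show d.1 < d.1 + k
        rw [Fin.lt_def]; omega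
      · show d.1 + k < d.2
        rw [Fin.lt_def]; omega
  · omega

lemma E_span {n : ℕ} (hn : 2 ≤ n) {T : Triangulation n} {k : Fin (n+2)}
    (hk : 3 * k.val = n + 2) (hT : T.diags.image (rotp k) = T.diags)
    {d : Fin (n+2) × Fin (n+2)} (hd : d ∈ Eset n T) :
    d.2.val - d.1.val ≤ k.val ∨ 2 * k.val ≤ d.2.val - d.1.val := by
  rcases E_cases hd with h | h | h
  · exact span_bound hn hk hT h
  · left; omega
  · right; omega

lemma tri {n : ℕ} (T : Triangulation n) (d : Fin (n+2) × Fin (n+2)) (hd : d ∈ Eset n T)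
    (hab : d.1.val + 2 ≤ d.2.val) :
    ∃ v : Fin (n+2), d.1.val < v.val ∧ v.val < d.2.val ∧
      (d.1, v) ∈ Eset n T ∧ (v, d.2) ∈ Eset n T := by
  classical
  have hb2 := d.2.isLt
  set P : ℕ → Prop := fun w => d.1.val < w ∧ w < d.2.val ∧
    (d.1, (⟨w % (n+2), Nat.mod_lt _ (by omega)⟩ : Fin (n+2))) ∈ Eset n T with hPdef
  have hP1 : P (d.1.val + 1) := by
    refine ⟨by omega, by omega, ?_⟩
    apply side_mem
    left
    simp only
    rw [Nat.mod_eq_of_lt (by omega)]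
  set v0 := Nat.findGreatest P d.2.val with hv0
  have hv0P : P v0 := Nat.findGreatest_spec (by omega) hP1
  obtain ⟨hv1, hv2, hvmem⟩ := hv0P
  have hv0lt : v0 < n + 2 := by omega
  set v : Fin (n+2) := ⟨v0, hv0lt⟩ with hvdef
  have hvv : v.val = v0 := rfl
  have hveq : (⟨v0 % (n+2), Nat.mod_lt _ (by omega)⟩ : Fin (n+2)) = v :=
    Fin.ext (Nat.mod_eq_of_lt hv0lt)
  rw [hveq] at hvmem
  have hmax : ∀ w : ℕ, P w → w ≤ v0 := fun w hw =>
    Nat.le_findGreatest (le_of_lt hw.2.1) hw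
  refine ⟨v, hv1, hv2, hvmem, ?_⟩
  by_cases hside : d.2.val = v0 + 1
  · exact side_mem _ _ (Or.inl hside)
  · have hnd : IsDiagonal n (v, d.2) := by
      refine ⟨Fin.lt_def.2 hv2, by simp only; omega, ?_⟩
      rintro ⟨h0, -⟩
      simp only at h0
      omega
    have hnc : ∀ g ∈ T.diags, ¬ Crossing (v, d.2) g := by
      intro g hg hcr
      have hglt : g.1.val < g.2.val := (T.isDiag g hg).1
      have hg2 := g.2.isLt
      rcases hcr with ⟨h1, h2, h3⟩ | ⟨h1, h2, h3⟩
      · have q1 : v.val < g.1.val := h1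
        have q2 : g.1.val < d.2.val := h2
        have q3 : d.2.val < g.2.val := h3
        exact E_nocross hd hg
          (Or.inl ⟨Fin.lt_def.2 (by omega), Fin.lt_def.2 (by omega), Fin.lt_def.2 (by omega)⟩)
      · have q1 : g.1.val < v.val := h1
        have q2 : v.val < g.2.val := h2
        have q3 : g.2.val < d.2.val := h3
        rcases lt_trichotomy g.1.val d.1.val with hx | hx | hx
        · exact E_nocross hd hg
            (Or.inr ⟨Fin.lt_def.2 (by omega), Fin.lt_def.2 (by omega), Fin.lt_def.2 (by omega)⟩)
        · have hPy : P g.2.val := by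
            refine ⟨by omega, by omega, ?_⟩
            have e2 : (⟨g.2.val % (n+2), Nat.mod_lt _ (by omega)⟩ : Fin (n+2)) = g.2 :=
              Fin.ext (Nat.mod_eq_of_lt hg2)
            rw [e2]
            have e1 : d.1 = g.1 := Fin.ext hx.symm
            rw [e1, Prod.mk.eta]
            exact Finset.mem_union_left _ hg
          have := hmax _ hPy
          omega
        · exact E_nocross hvmem hg
            (Or.inl ⟨Fin.lt_def.2 (show d.1.val < g.1.val by omega),
              Fin.lt_def.2 (show g.1.val < v0 by omega),
              Fin.lt_def.2 (show v0 < g.2.val by omega)⟩)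
    exact Finset.mem_union_left _ (T.maximal _ hnd hnc)

lemma descend {n : ℕ} (hn : 2 ≤ n) {T : Triangulation n} {k : Fin (n+2)}
    (hk : 3 * k.val = n + 2) (hT : T.diags.image (rotp k) = T.diags) :
    ∀ s : ℕ, ∀ d ∈ Eset n T, 2 * k.val ≤ d.2.val - d.1.val → d.2.val - d.1.val = s →
      ∃ e ∈ T.diags, e.1.val + 2 * k.val = e.2.val := by
  intro s
  induction s using Nat.strong_induction_on with
  | _ s ih =>
    intro d hd h2 hs
    have hlt := E_lt hd
    have hK : 2 ≤ k.val := by omega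
    rcases eq_or_lt_of_le h2 with heq | hgt
    · -- span exactly 2k : must be a diagonal
      rcases E_cases hd with h | h | h
      · exact ⟨d, h, by omega⟩
      · omega
      · omega
    · -- span > 2k : split via triangle lemma
      obtain ⟨v, hv1, hv2, hm1, hm2⟩ := tri T d hd (by omega)
      have ha : v.val - d.1.val ≤ k.val ∨ 2 * k.val ≤ v.val - d.1.val := E_span hn hk hT hm1
      have hb : d.2.val - v.val ≤ k.val ∨ 2 * k.val ≤ d.2.val - v.val := E_span hn hk hT hm2
      rcases ha with ha | ha
      · rcases hb with hb | hb
        · omega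
        · exact ih (d.2.val - v.val) (by omega) (v, d.2) hm2
            (show 2 * k.val ≤ d.2.val - v.val from hb) rfl
      · exact ih (v.val - d.1.val) (by omega) (d.1, v) hm1
          (show 2 * k.val ≤ v.val - d.1.val from ha) rfl

end CentralTri

/-- A triangulation of a convex `(n+2)`-gon invariant under rotation by `2π/3`
(i.e. by `k` steps where `3k = n+2`) exists only if `3 ∣ n+2`, equivalently `n ≡ 1 mod 3`,
and such a triangulation has a central triangle with vertices
`i`, `i + (n+2)/3`, `i + 2(n+2)/3` for some `i`, all three of whose sides are diagonals
of the triangulation. -/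
theorem fixed_by_thirdturn_has_central_triangle (n : ℕ) (hn : 2 ≤ n) (T : Triangulation n)
    (k : Fin (n + 2)) (hk : 3 * (k : ℕ) = n + 2)
    (hT : T.diags.image (rotp k) = T.diags) :
    (3 ∣ (n + 2) ∧ n % 3 = 1) ∧
      ∃ i : Fin (n + 2), opair i (i + k) ∈ T.diags ∧
        opair (i + k) (i + k + k) ∈ T.diags ∧ opair i (i + k + k) ∈ T.diags := by
  open CentralTri in
  refine ⟨⟨⟨k.val, by omega⟩, by omega⟩, ?_⟩
  have hK : 2 ≤ k.val := by omega
  -- start the descent from the long side (0, n+1)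
  have hside : ((⟨0, by omega⟩ : Fin (n+2)), (⟨n+1, by omega⟩ : Fin (n+2))) ∈
      CentralTri.Eset n T := by
    apply CentralTri.side_mem
    right
    exact ⟨rfl, rfl⟩
  obtain ⟨e, he, hespan⟩ := CentralTri.descend hn hk hT (n + 1)
    ((⟨0, by omega⟩ : Fin (n+2)), (⟨n+1, by omega⟩ : Fin (n+2))) hside
    (show 2 * k.val ≤ n + 1 - 0 by omega) (show n + 1 - 0 = n + 1 by omega)
  have he1 := e.1.isLt
  have he2 := e.2.isLt
  -- i := e.2 ; i + k = e.1
  have hik : e.2 + k = e.1 := by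
    apply Fin.ext
    rw [Fin.val_add]
    have : e.2.val + k.val = e.1.val + (n + 2) := by omega
    rw [this, Nat.add_mod_right, Nat.mod_eq_of_lt he1]
  have hik2 : e.1 + k + k = e.2 := by
    apply Fin.ext
    rw [Fin.val_add, Fin.val_add]
    have h1 : (e.1.val + k.val) % (n+2) = e.1.val + k.val := Nat.mod_eq_of_lt (by omega)
    rw [h1, Nat.mod_eq_of_lt (by omega)]
    omega
  refine ⟨e.2, ?_, ?_, ?_⟩
  · rw [hik]
    rw [CentralTri.opair_comm]
    have : opair e.1 e.2 = (e.1, e.2) := if_pos (le_of_lt ((T.isDiag e he).1))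
    rw [this, Prod.mk.eta]
    exact he
  · rw [hik]
    have hr : rotp k e ∈ T.diags := CentralTri.rot_mem hT he
    have : rotp k e = opair e.1 (e.1 + k) := by
      unfold rotp
      rw [hik]
      exact CentralTri.opair_comm _ _
    rwa [this] at hr
  · rw [hik]
    have hr : rotp k (rotp k e) ∈ T.diags :=
      CentralTri.rot_mem hT (CentralTri.rot_mem hT he)
    have h1 : rotp k e = opair e.1 (e.1 + k) := by
      unfold rotp
      rw [hik]
      exact CentralTri.opair_comm _ _
    rw [h1, CentralTri.rotp_opair, hik2] at hr
    rwa [CentralTri.opair_comm] at hr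
end

section
/- Let n ≥ 2. If a rotation of a convex (n+2)-gon by 2πk/(n+2), which has order m = (n+2)/gcd(k, n+2), fixes a triangulation of the polygon, then m ∈ {1, 2, 3}; that is, no triangulation of a convex (n+2)-gon is invariant under a rotation of order greater than 3. -/
lemma crossing_iff {M : ℕ} (d e : Fin M × Fin M) :
    Crossing d e ↔ ((d.1:ℕ) < (e.1:ℕ) ∧ (e.1:ℕ) < (d.2:ℕ) ∧ (d.2:ℕ) < (e.2:ℕ)) ∨
      ((e.1:ℕ) < (d.1:ℕ) ∧ (d.1:ℕ) < (e.2:ℕ) ∧ (e.2:ℕ) < (d.2:ℕ)) := by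
  simp only [Crossing, Fin.lt_def]

lemma isDiagonal_iff (n : ℕ) (d : Fin (n+2) × Fin (n+2)) :
    IsDiagonal n d ↔ (d.1:ℕ) + 1 < (d.2:ℕ) ∧ ¬((d.1 : ℕ) = 0 ∧ (d.2 : ℕ) = n + 1) := by
  constructor
  · rintro ⟨_, h2, h3⟩; exact ⟨h2, h3⟩
  · rintro ⟨h2, h3⟩; exact ⟨Fin.lt_def.mpr (by omega), h2, h3⟩

lemma ear_exists (n : ℕ) (hn : 2 ≤ n) (S : Finset (Fin (n+2) × Fin (n+2)))
    (hd : ∀ d ∈ S, IsDiagonal n d)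
    (hnc : ∀ d ∈ S, ∀ e ∈ S, ¬ Crossing d e)
    (hmax : ∀ d, IsDiagonal n d → (∀ e ∈ S, ¬ Crossing d e) → d ∈ S) :
    ∃ d ∈ S, (d.2 : ℕ) = (d.1 : ℕ) + 2 := by
  have hne : S.Nonempty := by
    by_contra h
    rw [Finset.not_nonempty_iff_eq_empty] at h
    subst h
    have := hmax (⟨0, by omega⟩, ⟨2, by omega⟩)
      ((isDiagonal_iff _ _).mpr (by simp; omega)) (by simp)
    simp at this
  obtain ⟨d, hdS, hmin⟩ := S.exists_min_image (fun d => (d.2:ℕ) - (d.1:ℕ)) hne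
  obtain ⟨-, hgap, hwrap⟩ := hd d hdS
  set a := (d.1 : ℕ) with ha
  set b := (d.2 : ℕ) with hb
  have hbn : b < n + 2 := d.2.isLt
  refine ⟨d, hdS, ?_⟩
  by_contra hne2
  have hb3 : a + 3 ≤ b := by omega
  have he : IsDiagonal n (d.1, ⟨a+2, by omega⟩) := by
    rw [isDiagonal_iff]
    exact ⟨show a + 1 < a + 2 by omega, show ¬(a = 0 ∧ a + 2 = n + 1) by omega⟩
  have heS : (d.1, ⟨a+2, by omega⟩) ∉ S := by
    intro h
    have := hmin _ h
    simp at this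
    omega
  have : ¬ (∀ e ∈ S, ¬ Crossing (d.1, (⟨a+2, by omega⟩ : Fin (n+2))) e) := by
    intro h; exact heS (hmax _ he h)
  push_neg at this
  obtain ⟨f, hfS, hcr⟩ := this
  obtain ⟨-, hfgap, -⟩ := hd f hfS
  rw [crossing_iff] at hcr
  simp only at hcr
  have hmf := hmin f hfS
  rcases hcr with ⟨h1, h2, h3⟩ | ⟨h1, h2, h3⟩
  · -- f.1 = a+1
    have hc : (f.1 : ℕ) = a + 1 := by omega
    rcases lt_or_ge b (f.2 : ℕ) with h | h
    · exact hnc d hdS f hfS (by rw [crossing_iff]; left; omega)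
    · omega
  · -- f.2 = a+1
    exact hnc d hdS f hfS (by rw [crossing_iff]; right; omega)

def gmap {M : ℕ} (a : ℕ) (v : Fin M) : Fin (M + 1) :=
  if (v : ℕ) ≤ a then v.castSucc else v.succ

lemma gmap_val {M : ℕ} (a : ℕ) (v : Fin M) :
    ((gmap a v : Fin (M+1)) : ℕ) = if (v:ℕ) ≤ a then (v:ℕ) else (v:ℕ) + 1 := by
  unfold gmap; split <;> simp

lemma gmap_ne {M : ℕ} (a : ℕ) (v : Fin M) : ((gmap a v : Fin (M+1)) : ℕ) ≠ a + 1 := by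
  rw [gmap_val]; split <;> omega

lemma gmap_lt_iff {M : ℕ} (a : ℕ) (u v : Fin M) : gmap a u < gmap a v ↔ u < v := by
  rw [Fin.lt_def, Fin.lt_def, gmap_val, gmap_val]
  split_ifs <;> omega

lemma gmap_inj {M : ℕ} (a : ℕ) {u v : Fin M} (h : gmap a u = gmap a v) : u = v := by
  have hv := congrArg Fin.val h
  rw [gmap_val, gmap_val] at hv
  apply Fin.ext
  split_ifs at hv <;> omega

lemma gmap_surj {M : ℕ} (a : ℕ) (ha : a + 1 < M) (w : Fin (M+1)) (hw : (w:ℕ) ≠ a + 1) :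
    ∃ v : Fin M, gmap a v = w := by
  rcases le_or_gt (w : ℕ) a with h | h
  · exact ⟨⟨(w:ℕ), by omega⟩, Fin.ext (by rw [gmap_val]; simp [h])⟩
  · refine ⟨⟨(w:ℕ) - 1, by have := w.isLt; omega⟩, Fin.ext ?_⟩
    rw [gmap_val]
    have := w.isLt
    split <;> simp_all <;> omega

lemma crossing_gmap {M : ℕ} (a : ℕ) (d e : Fin M × Fin M) :
    Crossing (gmap a d.1, gmap a d.2) (gmap a e.1, gmap a e.2) ↔ Crossing d e := by
  simp only [Crossing, gmap_lt_iff]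

theorem maximal_card : ∀ (n : ℕ) (S : Finset (Fin (n+2) × Fin (n+2))),
    (∀ d ∈ S, IsDiagonal n d) → (∀ d ∈ S, ∀ e ∈ S, ¬ Crossing d e) →
    (∀ d, IsDiagonal n d → (∀ e ∈ S, ¬ Crossing d e) → d ∈ S) →
    S.card = n - 1 := by
  intro n
  induction n with
  | zero =>
    intro S hd _ _
    have : S = ∅ := Finset.eq_empty_of_forall_notMem (fun d hdS => by
      obtain ⟨-, hgap, hwrap⟩ := hd d hdS
      have := d.2.isLt; omega)
    simp [this]
  | succ m ih =>
    intro S hd hnc hmax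
    rcases Nat.eq_zero_or_pos m with rfl | hm
    · have : S = ∅ := Finset.eq_empty_of_forall_notMem (fun d hdS => by
        obtain ⟨-, hgap, hwrap⟩ := hd d hdS
        have := d.2.isLt; omega)
      simp [this]
    -- main case : m ≥ 1, big polygon has m+3 vertices
    obtain ⟨d, hdS, hd2⟩ := ear_exists (m+1) (by omega) S hd hnc hmax
    set a := (d.1 : ℕ) with ha_def
    have ha : a ≤ m := by have := d.2.isLt; omega
    -- no diagonal of S has endpoint a+1
    have key : ∀ e ∈ S, (e.1 : ℕ) ≠ a + 1 ∧ (e.2 : ℕ) ≠ a + 1 := by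
      intro e heS
      obtain ⟨-, hegap, -⟩ := hd e heS
      constructor
      · intro h
        exact hnc d hdS e heS (by rw [crossing_iff]; left; omega)
      · intro h
        exact hnc d hdS e heS (by rw [crossing_iff]; right; omega)
    -- the reduced set on the (m+2)-gon
    set S' : Finset (Fin (m+2) × Fin (m+2)) :=
      Finset.univ.filter
        (fun e' : Fin (m+2) × Fin (m+2) => (gmap a e'.1, gmap a e'.2) ∈ S.erase d)
      with hS'_def
    have memS' : ∀ e' : Fin (m+2) × Fin (m+2),
        e' ∈ S' ↔ (gmap a e'.1, gmap a e'.2) ∈ S.erase d := by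
      intro e'; simp [hS'_def]
    have hd' : ∀ e' ∈ S', IsDiagonal m e' := by
      rintro ⟨u1, u2⟩ hmem
      rw [memS', Finset.mem_erase] at hmem
      obtain ⟨hne_d, hES⟩ := hmem
      obtain ⟨-, hgap, hwrap⟩ := hd _ hES
      simp only at hgap hwrap
      have hnd : ¬((gmap a u1 : ℕ) = (d.1 : ℕ) ∧ (gmap a u2 : ℕ) = (d.2 : ℕ)) := by
        rintro ⟨h1, h2⟩
        exact hne_d (Prod.ext (Fin.ext h1) (Fin.ext h2))
      rw [isDiagonal_iff]
      simp only
      rw [gmap_val, gmap_val] at hgap hwrap hnd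
      have h1 := u1.isLt
      have h2 := u2.isLt
      rw [← ha_def] at hnd
      split_ifs at hgap hwrap hnd <;> omega
    have hnc' : ∀ d' ∈ S', ∀ e' ∈ S', ¬ Crossing d' e' := by
      intro d' hd'm e' he'm hc
      rw [memS', Finset.mem_erase] at hd'm he'm
      exact hnc _ hd'm.2 _ he'm.2 ((crossing_gmap a d' e').mpr hc)
    have hmax' : ∀ d', IsDiagonal m d' → (∀ e' ∈ S', ¬ Crossing d' e') → d' ∈ S' := by
      rintro ⟨u1, u2⟩ hdiag hno
      rw [isDiagonal_iff] at hdiag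
      simp only at hdiag
      set D : Fin (m+3) × Fin (m+3) := (gmap a u1, gmap a u2) with hD_def
      have hDdiag : IsDiagonal (m+1) D := by
        rw [isDiagonal_iff]
        simp only [hD_def]
        rw [gmap_val, gmap_val]
        have h1 := u1.isLt
        have h2 := u2.isLt
        split_ifs <;>
          (try simp only [false_and, not_false_eq_true, and_true, true_and, and_false]) <;> omega
      have hDnc : ∀ e ∈ S, ¬ Crossing D e := by
        rintro ⟨e1, e2⟩ heS hc
        by_cases he : ((e1, e2) : Fin (m+3) × Fin (m+3)) = d
        · rw [crossing_iff] at hc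
          simp only [hD_def] at hc
          have n1 := gmap_ne a u1
          have n2 := gmap_ne a u2
          rw [← he] at ha_def hd2
          have hv1 : (e1 : ℕ) = a := ha_def.symm
          have hv2 : (e2 : ℕ) = a + 2 := hd2
          omega
        · obtain ⟨k1, k2⟩ := key _ heS
          simp only at k1 k2
          obtain ⟨v1, hv1⟩ := gmap_surj a (by omega) e1 k1
          obtain ⟨v2, hv2⟩ := gmap_surj a (by omega) e2 k2
          have hvm : (v1, v2) ∈ S' := by
            rw [memS']
            simp only
            rw [hv1, hv2]
            exact Finset.mem_erase.mpr ⟨he, heS⟩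
          apply hno _ hvm
          have : Crossing (gmap a u1, gmap a u2) (gmap a v1, gmap a v2) := by
            rw [hv1, hv2]; exact hc
          exact (crossing_gmap a (u1, u2) (v1, v2)).mp this
      have hDS : D ∈ S := hmax D hDdiag hDnc
      have hDne : D ≠ d := by
        intro hEq
        rw [Prod.ext_iff] at hEq
        have e1 := congrArg Fin.val hEq.1
        have e2 := congrArg Fin.val hEq.2
        simp only [hD_def] at e1 e2
        rw [gmap_val] at e1
        rw [gmap_val] at e2
        rw [← ha_def] at e1
        have := u2.isLt
        split_ifs at e1 e2 <;> omega
      rw [memS']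
      exact Finset.mem_erase.mpr ⟨hDne, hDS⟩
    have hcard' : S'.card = m - 1 := ih S' hd' hnc' hmax'
    have hbij : S'.card = (S.erase d).card := by
      apply Finset.card_bij (fun e' _ => ((gmap a e'.1, gmap a e'.2) : Fin (m+3) × Fin (m+3)))
      · intro e' he'
        rw [memS'] at he'
        exact he'
      · intro e1' h1 e2' h2 hEq
        rw [Prod.ext_iff] at hEq
        exact Prod.ext (gmap_inj a hEq.1) (gmap_inj a hEq.2)
      · rintro ⟨e1, e2⟩ heE
        have heS := Finset.mem_of_mem_erase heE
        obtain ⟨k1, k2⟩ := key _ heS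
        simp only at k1 k2
        obtain ⟨v1, hv1⟩ := gmap_surj a (by omega) e1 k1
        obtain ⟨v2, hv2⟩ := gmap_surj a (by omega) e2 k2
        refine ⟨(v1, v2), ?_, ?_⟩
        · rw [memS']
          simp only
          rw [hv1, hv2]
          exact heE
        · simp only
          rw [hv1, hv2]
    have hpos : 0 < S.card := Finset.card_pos.mpr ⟨d, hdS⟩
    have := Finset.card_erase_of_mem hdS
    omega

lemma opair_comm {M : ℕ} (a b : Fin M) : opair a b = opair b a := by
  unfold opair
  rcases lt_trichotomy a b with h | h | h
  · rw [if_pos h.le, if_neg (not_le.mpr h)]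
  · subst h; simp
  · rw [if_neg (not_le.mpr h), if_pos h.le]

lemma opair_cases {M : ℕ} (a b : Fin M) : opair a b = (a, b) ∨ opair a b = (b, a) := by
  unfold opair; split_ifs
  · exact Or.inl rfl
  · exact Or.inr rfl

lemma rotp_opair {M : ℕ} (k a b : Fin M) : rotp k (opair a b) = opair (a + k) (b + k) := by
  by_cases h : a ≤ b
  · rw [show opair a b = (a, b) from if_pos h]; rfl
  · rw [show opair a b = (b, a) from if_neg h]
    show opair (b + k) (a + k) = opair (a + k) (b + k)
    exact opair_comm _ _

lemma val_nsmul_fin (n : ℕ) (k : Fin (n+2)) (j : ℕ) :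
    ((j • k : Fin (n+2)) : ℕ) = j * (k : ℕ) % (n+2) := by
  induction j with
  | zero => simp
  | succ j ih =>
    rw [succ_nsmul, Fin.val_add, ih, Nat.mod_add_mod, Nat.succ_mul]

lemma rotp_iterate (n : ℕ) (k : Fin (n+2)) (j : ℕ) (x y : Fin (n+2)) :
    (rotp k)^[j] (opair x y) = opair (x + j • k) (y + j • k) := by
  induction j with
  | zero => simp
  | succ j ih =>
    rw [Function.iterate_succ_apply', ih, rotp_opair, succ_nsmul, ← add_assoc, ← add_assoc]

lemma dvd_card_of_free {α : Type*} [DecidableEq α] (m : ℕ) (hm : 0 < m) (f : α → α) :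
    ∀ (c : ℕ) (s : Finset α), s.card ≤ c →
      (∀ x ∈ s, f x ∈ s) → (∀ x ∈ s, f^[m] x = x) →
      (∀ x ∈ s, ∀ j, 0 < j → j < m → f^[j] x ≠ x) → m ∣ s.card := by
  intro c
  induction c with
  | zero =>
    intro s hc _ _ _
    rw [Nat.le_zero] at hc
    simp [hc]
  | succ c ihc =>
    intro s hc hmap hper hfree
    rcases s.eq_empty_or_nonempty with rfl | ⟨x, hx⟩
    · simp
    have hiter : ∀ j, f^[j] x ∈ s := by
      intro j
      induction j with
      | zero => exact hx
      | succ j ih => rw [Function.iterate_succ_apply']; exact hmap _ ih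
    set O := (Finset.range m).image (fun j => f^[j] x) with hO
    have hOsub : O ⊆ s := by
      intro y hy
      rw [hO, Finset.mem_image] at hy
      obtain ⟨j, -, rfl⟩ := hy
      exact hiter j
    have hOcard : O.card = m := by
      rw [hO, Finset.card_image_of_injOn, Finset.card_range]
      intro i hi j hj hij
      simp only [Finset.coe_range, Set.mem_Iio] at hi hj
      by_contra hne
      have hij' : f^[i] x = f^[j] x := hij
      rcases Nat.lt_or_ge i j with h | h
      · have h1 : f^[m - j] (f^[i] x) = f^[m - j] (f^[j] x) := by rw [hij']
        rw [← Function.iterate_add_apply, ← Function.iterate_add_apply] at h1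
        have h2 : m - j + j = m := by omega
        rw [h2, hper x hx] at h1
        exact hfree x hx (m - j + i) (by omega) (by omega) h1
      · have h : j < i := by omega
        have h1 : f^[m - i] (f^[j] x) = f^[m - i] (f^[i] x) := by rw [hij']
        rw [← Function.iterate_add_apply, ← Function.iterate_add_apply] at h1
        have h2 : m - i + i = m := by omega
        rw [h2, hper x hx] at h1
        exact hfree x hx (m - i + j) (by omega) (by omega) h1
    have hmap' : ∀ y ∈ s \ O, f y ∈ s \ O := by
      intro y hy
      rw [Finset.mem_sdiff] at hy ⊢
      refine ⟨hmap y hy.1, fun hfy => ?_⟩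
      rw [hO, Finset.mem_image] at hfy
      obtain ⟨j, hj, hjy⟩ := hfy
      rw [Finset.mem_range] at hj
      apply hy.2
      rw [hO, Finset.mem_image]
      have hmy : f^[m - 1] (f y) = y := by
        calc f^[m-1] (f y) = f^[m-1+1] y := (Function.iterate_succ_apply f (m-1) y).symm
        _ = f^[m] y := by rw [Nat.sub_add_cancel hm]
        _ = y := hper y hy.1
      rcases Nat.eq_zero_or_pos j with rfl | hjpos
      · refine ⟨m - 1, Finset.mem_range.mpr (by omega), ?_⟩
        simp only [Function.iterate_zero_apply] at hjy
        rw [← hjy] at hmy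
        exact hmy
      · refine ⟨j - 1, Finset.mem_range.mpr (by omega), ?_⟩
        rw [← hjy, ← Function.iterate_add_apply] at hmy
        have : m - 1 + j = (j - 1) + m := by omega
        rw [this, Function.iterate_add_apply, hper x hx] at hmy
        exact hmy
    have hcard : (s \ O).card = s.card - m := by rw [Finset.card_sdiff_of_subset hOsub, hOcard]
    have hmle : m ≤ s.card := hOcard ▸ Finset.card_le_card hOsub
    have ihd := ihc (s \ O) (by omega)
      hmap' (fun y hy => hper y ((Finset.mem_sdiff.mp hy).1))
      (fun y hy => hfree y ((Finset.mem_sdiff.mp hy).1))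
    rw [hcard] at ihd
    have := Nat.dvd_add ihd (dvd_refl m)
    rwa [Nat.sub_add_cancel hmle] at this

lemma eq_of_dvd_lt_two_mul {N x : ℕ} (h : N ∣ x) (h0 : 0 < x) (h2 : x < 2 * N) : x = N := by
  obtain ⟨c, rfl⟩ := h
  have hc1 : c ≠ 0 := by rintro rfl; simp at h0
  have hc2 : c < 2 := by
    by_contra hc
    push_neg at hc
    have := Nat.mul_le_mul_left N hc
    omega
  have : c = 1 := by omega
  subst this
  exact Nat.mul_one N

/-- No triangulation of a convex `(n+2)`-gon with `n ≥ 2` is invariant under a rotation of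
order greater than 3: if the rotation by `k` steps (of order `(n+2)/gcd(k, n+2)`) fixes a
triangulation, then that order is 1, 2 or 3. -/
theorem no_symmetry_of_order_gt_three (n : ℕ) (hn : 2 ≤ n) (T : Triangulation n)
    (k : Fin (n + 2)) (hT : T.diags.image (rotp k) = T.diags) :
    (n + 2) / Nat.gcd (k : ℕ) (n + 2) = 1 ∨
    (n + 2) / Nat.gcd (k : ℕ) (n + 2) = 2 ∨
    (n + 2) / Nat.gcd (k : ℕ) (n + 2) = 3 := by
  have hd1lt : ∀ d ∈ T.diags, (d.1 : ℕ) < (d.2 : ℕ) := fun d h => (T.isDiag d h).1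
  have hopair : ∀ d ∈ T.diags, opair d.1 d.2 = d := by
    intro d h
    rw [show opair d.1 d.2 = (d.1, d.2) from if_pos (le_of_lt (T.isDiag d h).1)]
  have hmapsto : ∀ d ∈ T.diags, rotp k d ∈ T.diags := fun d h =>
    hT ▸ Finset.mem_image_of_mem _ h
  set g := Nat.gcd (k : ℕ) (n + 2) with hg
  have hgpos : 0 < g := Nat.gcd_pos_of_pos_right _ (by omega)
  have hgdvd : g ∣ n + 2 := Nat.gcd_dvd_right _ _
  have hgdvdk : g ∣ (k : ℕ) := Nat.gcd_dvd_left _ _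
  set m := (n + 2) / g with hm
  have hNm : m * g = n + 2 := Nat.div_mul_cancel hgdvd
  have hmpos : 0 < m := Nat.div_pos (Nat.le_of_dvd (by omega) hgdvd) hgpos
  by_cases hk0 : (k : ℕ) = 0
  · left
    rw [hm, hg, hk0, Nat.gcd_zero_left, Nat.div_self (by omega : 0 < n + 2)]
  by_cases hk2 : 2 * (k : ℕ) = n + 2
  · right; left
    obtain ⟨K, hK⟩ : ∃ K, (k : ℕ) = K := ⟨_, rfl⟩
    rw [hK] at hk2 hk0
    rw [hm, hg, hK, Nat.gcd_eq_left ⟨2, by omega⟩,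
      show n + 2 = K * 2 by omega, Nat.mul_div_cancel_left 2 (by omega : 0 < K)]
  -- main case
  have hdvd_j : ∀ j : ℕ, (n + 2) ∣ j * (k : ℕ) → m ∣ j := by
    intro j hj
    have hco : Nat.Coprime ((k:ℕ) / g) m := Nat.coprime_div_gcd_div_gcd hgpos
    have h1 : m * g ∣ (j * ((k:ℕ)/g)) * g := by
      have : (j * ((k:ℕ)/g)) * g = j * (g * ((k:ℕ)/g)) := by ring
      rw [this, Nat.mul_div_cancel' hgdvdk, hNm]
      exact hj
    have h2 : m ∣ j * ((k:ℕ)/g) := (Nat.mul_dvd_mul_iff_right hgpos).mp h1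
    exact Nat.Coprime.dvd_of_dvd_mul_right hco.symm h2
  -- no diagonal of T is a diameter
  have hnodia : ∀ d ∈ T.diags, 2 * ((d.2 : ℕ) - (d.1 : ℕ)) ≠ n + 2 := by
    intro d hdm hdd
    set t := (d.2 : ℕ) - (d.1 : ℕ) with ht
    have hlt := hd1lt d hdm
    have hb := d.2.isLt
    have hd2v : (d.2 : ℕ) = (d.1 : ℕ) + t := by omega
    have hd1t : (d.1 : ℕ) < t := by omega
    set e := rotp k d with he
    have heT : e ∈ T.diags := hmapsto d hdm
    have helt := hd1lt e heT
    have heb := e.2.isLt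
    -- e is also a diameter
    have he2v : (e.2 : ℕ) = (e.1 : ℕ) + t := by
      have h1 : e = opair (d.1 + k) (d.2 + k) := by rw [he]; rfl
      set u := ((d.1 + k : Fin (n+2)) : ℕ) with hu
      have hvval : ((d.2 + k : Fin (n+2)) : ℕ) = (u + t) % (n+2) := by
        rw [Fin.val_add, hd2v, hu, Fin.val_add]
        rw [show (d.1:ℕ) + t + (k:ℕ) = (d.1:ℕ) + (k:ℕ) + t by ring]
        rw [Nat.mod_add_mod]
      have hulN : u < n + 2 := (d.1 + k).isLt
      rcases opair_cases (d.1 + k) (d.2 + k) with hcase | hcase <;>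
        rw [hcase] at h1
      · have he1 : (e.1 : ℕ) = u := by rw [h1]
        have he2 : (e.2 : ℕ) = (u + t) % (n+2) := by rw [h1]; exact hvval
        rcases Nat.lt_or_ge (u + t) (n + 2) with hlt2 | hge2
        · rw [he1, he2, Nat.mod_eq_of_lt hlt2]
        · exfalso
          have hmod : (u + t) % (n + 2) = u + t - (n+2) := by
            rw [Nat.mod_eq_sub_mod hge2, Nat.mod_eq_of_lt (by omega)]
          rw [he1] at helt
          rw [he2, hmod] at helt
          omega
      · have he1 : (e.1 : ℕ) = (u + t) % (n+2) := by rw [h1]; exact hvval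
        have he2 : (e.2 : ℕ) = u := by rw [h1]
        rcases Nat.lt_or_ge (u + t) (n + 2) with hlt2 | hge2
        · exfalso
          rw [Nat.mod_eq_of_lt hlt2] at he1
          rw [he1, he2] at helt
          omega
        · have hmod : (u + t) % (n + 2) = u + t - (n+2) := by
            rw [Nat.mod_eq_sub_mod hge2, Nat.mod_eq_of_lt (by omega)]
          rw [hmod] at he1
          rw [he1, he2]
          omega
    have he1t : (e.1 : ℕ) < t := by omega
    -- compare d.1 and e.1
    rcases lt_trichotomy (d.1 : ℕ) (e.1 : ℕ) with hcmp | hcmp | hcmp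
    · exact T.noncross d hdm e heT (by rw [crossing_iff]; left; omega)
    · -- e = d, so rotp k d = d, impossible since k ≠ 0 and 2k ≠ n+2
      have hed : rotp k d = d := by
        rw [← he]
        apply Prod.ext <;> apply Fin.ext
        · exact hcmp.symm
        · omega
      have hfix : opair (d.1 + k) (d.2 + k) = d := hed
      rcases opair_cases (d.1 + k) (d.2 + k) with hcase | hcase <;>
        rw [hcase] at hfix
      · have h1 : d.1 + k = d.1 := congrArg Prod.fst hfix
        have hk : k = 0 := by
          have := add_eq_left.mp h1
          exact this
        exact hk0 (by rw [hk]; rfl)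
      · have h1 : d.2 + k = d.1 := congrArg Prod.fst hfix
        have h2 : d.1 + k = d.2 := congrArg Prod.snd hfix
        have hkk : k + k = 0 := by
          have : d.1 + (k + k) = d.1 := by
            rw [← add_assoc, h2, h1]
          exact add_eq_left.mp this
        have hval : ((k:ℕ) + (k:ℕ)) % (n+2) = 0 := by
          have := congrArg Fin.val hkk
          rwa [Fin.val_add] at this
        have hdv : (n+2) ∣ (k:ℕ) + (k:ℕ) := Nat.dvd_of_mod_eq_zero hval
        have hklt := k.isLt
        have : (k:ℕ) + (k:ℕ) = n + 2 :=
          eq_of_dvd_lt_two_mul hdv (by omega) (by omega)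
        omega
    · exact T.noncross e heT d hdm (by rw [crossing_iff]; left; omega)
  -- freeness of the iterated rotation on diagonals
  have hfree : ∀ d ∈ T.diags, ∀ j, 0 < j → j < m → (rotp k)^[j] d ≠ d := by
    intro d hdm j hj0 hjm hfx
    have hfx2 : opair (d.1 + j • k) (d.2 + j • k) = d := by
      rw [← rotp_iterate, hopair d hdm]
      exact hfx
    have hlt := hd1lt d hdm
    rcases opair_cases (d.1 + j • k) (d.2 + j • k) with hcase | hcase <;>
      rw [hcase] at hfx2
    · have h1 : d.1 + j • k = d.1 := congrArg Prod.fst hfx2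
      have hjk : j • k = 0 := add_eq_left.mp h1
      have hval : j * (k:ℕ) % (n+2) = 0 := by
        rw [← val_nsmul_fin, hjk]; rfl
      have := hdvd_j j (Nat.dvd_of_mod_eq_zero hval)
      exact absurd (Nat.le_of_dvd hj0 this) (by omega)
    · have h1 : d.2 + j • k = d.1 := congrArg Prod.fst hfx2
      have h2 : d.1 + j • k = d.2 := congrArg Prod.snd hfx2
      set t' := ((j • k : Fin (n+2)) : ℕ) with ht'
      have ht'lt : t' < n + 2 := (j • k).isLt
      have ht'0 : t' ≠ 0 := by
        intro h0
        have : j • k = (0 : Fin (n+2)) := Fin.ext h0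
        rw [this, add_zero] at h2
        have := congrArg Fin.val h2
        omega
      have hkk : j • k + j • k = 0 := by
        have : d.1 + (j • k + j • k) = d.1 := by
          rw [← add_assoc, h2, h1]
        exact add_eq_left.mp this
      have hval : (t' + t') % (n+2) = 0 := by
        have := congrArg Fin.val hkk
        rwa [Fin.val_add] at this
      have h2t : t' + t' = n + 2 :=
        eq_of_dvd_lt_two_mul (Nat.dvd_of_mod_eq_zero hval) (by omega) (by omega)
      -- d is a diameter
      have hd2val : (d.2 : ℕ) = ((d.1 : ℕ) + t') % (n + 2) := by
        have hh := congrArg Fin.val h2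
        rw [Fin.val_add] at hh
        exact hh.symm
      have hb := d.2.isLt
      rcases Nat.lt_or_ge ((d.1:ℕ) + t') (n + 2) with hlt2 | hge2
      · rw [Nat.mod_eq_of_lt hlt2] at hd2val
        exact hnodia d hdm (by omega)
      · have hmod : ((d.1:ℕ) + t') % (n + 2) = (d.1:ℕ) + t' - (n+2) := by
          rw [Nat.mod_eq_sub_mod hge2, Nat.mod_eq_of_lt (by omega)]
        rw [hmod] at hd2val
        omega
  -- periodicity
  have hper : ∀ d ∈ T.diags, (rotp k)^[m] d = d := by
    intro d hdm
    have hmk : m • k = (0 : Fin (n+2)) := by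
      apply Fin.ext
      rw [val_nsmul_fin]
      have : (n + 2) ∣ m * (k : ℕ) := by
        obtain ⟨K, hK⟩ : ∃ K, (k : ℕ) = K := ⟨_, rfl⟩
        have hgK : g ∣ K := hK ▸ hgdvdk
        rw [hK]
        refine ⟨K / g, ?_⟩
        rw [← hNm]
        rw [show m * g * (K/g) = m * (g * (K/g)) by ring, Nat.mul_div_cancel' hgK]
      obtain ⟨c, hc⟩ := this
      rw [hc, Fin.val_zero]
      exact Nat.mul_mod_right _ _
    calc (rotp k)^[m] d = (rotp k)^[m] (opair d.1 d.2) := by rw [hopair d hdm]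
      _ = opair (d.1 + m • k) (d.2 + m • k) := rotp_iterate n k m d.1 d.2
      _ = opair d.1 d.2 := by rw [hmk, add_zero, add_zero]
      _ = d := hopair d hdm
  have hdvdcard : m ∣ T.diags.card :=
    dvd_card_of_free m hmpos (rotp k) T.diags.card T.diags le_rfl hmapsto hper hfree
  have hcard := maximal_card n T.diags T.isDiag T.noncross T.maximal
  have hmdvdN : m ∣ n + 2 := ⟨g, hNm.symm⟩
  have h3 : m ∣ 3 := by
    have := Nat.dvd_sub hmdvdN (hcard ▸ hdvdcard)
    rwa [show (n + 2) - (n - 1) = 3 by omega] at this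
  rcases Nat.Prime.eq_one_or_self_of_dvd Nat.prime_three m h3 with h | h
  · exact Or.inl h
  · exact Or.inr (Or.inr h)
end
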